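/- arXiv:2111.15287 — 2 statements merged into one kernel-verified Lean document; each statement's English description precedes it below -/
import Mathlib

section
/- Let ℓ be a prime and k ≥ 2 an integer, and set r = gcd(k−1, ℓ−1). Then for every positive integer n, ℓ divides σ_{k−1}(n) if and only if ℓ divides σ_r(n). -/
/-!
Both sides are multiplicative in `n`, so for a prime `ℓ` it suffices to compare them on prime
powers `p ^ a`. Modulo `ℓ`, `σ_m (p ^ a)` is the geometric sum `∑_{i ≤ a} (p ^ m) ^ i`, whose
vanishing in the domain `ZMod ℓ` depends only on the multiplicative order of `p ^ m`. Since the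
order of a nonzero residue divides `ℓ - 1`, the orders of `p ^ (k - 1)` and
`p ^ gcd (k - 1) (ℓ - 1)` agree (for `p = ℓ` both powers are `0`).
-/

/-- `mySigma m n = ∑_{d ∣ n} d^m`, the sum of `m`-th powers of the divisors of `n`. -/
def mySigma (m n : ℕ) : ℕ := ∑ d ∈ n.divisors, d ^ m

open Finset ArithmeticFunction
open scoped ArithmeticFunction.sigma

theorem geom_sum_eq_zero_iff_of_orderOf_eq {R : Type*} [CommRing R] [IsDomain R] {x y : R}
    (h : orderOf x = orderOf y) (N : ℕ) :
    ∑ i ∈ range N, x ^ i = 0 ↔ ∑ i ∈ range N, y ^ i = 0 := by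
  -- away from `1`, the sum vanishes iff `x ^ N = 1`, since `(∑ x ^ i) * (x - 1) = x ^ N - 1`
  have key : ∀ z : R, ∑ i ∈ range N, z ^ i = 0 ↔
      if orderOf z = 1 then (N : R) = 0 else orderOf z ∣ N := by
    intro z
    split_ifs with hz
    · simp [orderOf_eq_one_iff.mp hz]
    · rw [orderOf_dvd_iff_pow_eq_one, ← sub_eq_zero (a := z ^ N), ← geom_sum_mul,
        mul_eq_zero, or_iff_left (sub_ne_zero.mpr (orderOf_eq_one_iff.not.mp hz))]
  rw [key, key, h]

theorem orderOf_pow_eq_orderOf_pow_gcd {M : Type*} [Monoid M] {x : M} {d m : ℕ}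
    (hx : x ^ d = 1) (hm : m ≠ 0) :
    orderOf (x ^ m) = orderOf (x ^ Nat.gcd m d) := by
  have hgcd : Nat.gcd m d ≠ 0 := Nat.gcd_ne_zero_left hm
  rw [orderOf_pow' x hm, orderOf_pow' x hgcd, ← Nat.gcd_assoc,
    Nat.gcd_eq_left ((Nat.gcd_dvd_left _ _).trans (orderOf_dvd_of_pow_eq_one hx))]

theorem ZMod.orderOf_pow_eq_orderOf_pow_gcd {ℓ : ℕ} [Fact ℓ.Prime] (x : ZMod ℓ) {m : ℕ}
    (hm : m ≠ 0) : orderOf (x ^ m) = orderOf (x ^ Nat.gcd m (ℓ - 1)) := by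
  rcases eq_or_ne x 0 with rfl | hx
  · rw [zero_pow hm, zero_pow (Nat.gcd_ne_zero_left hm)]
  · exact _root_.orderOf_pow_eq_orderOf_pow_gcd (ZMod.pow_card_sub_one_eq_one hx) hm

theorem ArithmeticFunction.IsMultiplicative.prime_dvd_iff {f g : ArithmeticFunction ℕ}
    (hf : f.IsMultiplicative) (hg : g.IsMultiplicative) {ℓ : ℕ} (hℓ : ℓ.Prime)
    (hfg : ∀ p a : ℕ, p.Prime → (ℓ ∣ f (p ^ a) ↔ ℓ ∣ g (p ^ a))) {n : ℕ} (hn : n ≠ 0) :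
    ℓ ∣ f n ↔ ℓ ∣ g n := by
  rw [hf.multiplicative_factorization f hn, hg.multiplicative_factorization g hn, Finsupp.prod,
    Finsupp.prod, Prime.dvd_finsetProd_iff hℓ.prime, Prime.dvd_finsetProd_iff hℓ.prime]
  exact exists_congr fun p => and_congr_right fun hp =>
    hfg p _ (Nat.prime_of_mem_primeFactors (Nat.support_factorization n ▸ hp))

theorem ArithmeticFunction.natCast_sigma_prime_pow {R : Type*} [CommSemiring R] {p : ℕ}
    (hp : p.Prime) (m a : ℕ) :
    ((σ m (p ^ a) : ℕ) : R) = ∑ i ∈ range (a + 1), ((p : R) ^ m) ^ i := by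
  simp [sigma_apply_prime_pow hp, ← pow_mul, mul_comm]

theorem mySigma_eq_sigma (m n : ℕ) : mySigma m n = σ m n := by
  rw [sigma_apply, mySigma]

theorem stmt8 (ℓ k : ℕ) (hℓ : ℓ.Prime) (hk : 2 ≤ k)
    (r : ℕ) (hr : r = Nat.gcd (k - 1) (ℓ - 1)) :
    ∀ n : ℕ, 0 < n → (ℓ ∣ mySigma (k - 1) n ↔ ℓ ∣ mySigma r n) := by
  have := Fact.mk hℓ
  intro n hn
  rw [mySigma_eq_sigma, mySigma_eq_sigma]
  refine isMultiplicative_sigma.prime_dvd_iff isMultiplicative_sigma hℓ (fun p a hp => ?_) hn.ne'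
  rw [← ZMod.natCast_eq_zero_iff, ← ZMod.natCast_eq_zero_iff, natCast_sigma_prime_pow hp,
    natCast_sigma_prime_pow hp, hr]
  exact geom_sum_eq_zero_iff_of_orderOf_eq (ZMod.orderOf_pow_eq_orderOf_pow_gcd _ (by omega)) _
end

section
/- Let p be a prime and α ≥ 1 an integer. Then 1 + (α·(240p³ − 504p²)·(p² + p³) − 24)·B_{2+10α}·(1 + p^{1+5α}) / (2·(1 + 10α)·(p² + p³)^α) ≠ 0, where the expression is computed in the rational numbers. -/
/-!
The expression vanishes only if the fraction equals `-1`, and its absolute value is in fact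
larger than `1`. Euler's formula `ζ(2k) = (2π)^(2k) |B_{2k}| / (2 (2k)!)` together with
`ζ(2k) ≥ 1` gives `|B_{2k}| ≥ 2 (2k)! / (2π)^(2k) ≥ 1/5` once `2k ≥ 12`. For a prime `p` the
factor `α (240p³ - 504p²)(p² + p³) - 24` has absolute value at least `1152 α` (it is
`-1152 α - 24` at `p = 2`), and `1 + p^(1+5α)` exceeds `(p² + p³)^α ≤ p^(4α)`; since
`1152 α / 5 > 2 (1 + 10α)`, the numerator beats the denominator.
-/

open Real Nat

theorem two_mul_factorial_le_two_pi_pow_mul_abs_bernoulli {k : ℕ} (hk : k ≠ 0) :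
    2 * ((2 * k)! : ℝ) ≤ (2 * π) ^ (2 * k) * |(bernoulli (2 * k) : ℝ)| := by
  have hζ : (1 : ℝ) ≤
      (-1) ^ (k + 1) * 2 ^ (2 * k - 1) * π ^ (2 * k) * bernoulli (2 * k) / (2 * k)! := by
    simpa using le_hasSum (hasSum_zeta_nat hk) 1 (fun n _ => by positivity)
  rw [one_le_div (by positivity)] at hζ
  calc 2 * ((2 * k)! : ℝ)
      ≤ 2 * ((-1) ^ (k + 1) * 2 ^ (2 * k - 1) * π ^ (2 * k) * bernoulli (2 * k)) := by linarith
    _ ≤ 2 * |(-1) ^ (k + 1) * 2 ^ (2 * k - 1) * π ^ (2 * k) * (bernoulli (2 * k) : ℝ)| := by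
        gcongr; exact le_abs_self _
    _ = (2 * π) ^ (2 * k) * |(bernoulli (2 * k) : ℝ)| := by
        simp only [abs_mul, abs_pow, abs_neg, abs_one, one_pow, one_mul, abs_two,
          abs_of_pos pi_pos, mul_pow, ← mul_pow_sub_one (show 2 * k ≠ 0 by omega) (2 : ℝ)]
        ring

theorem forty_pow_le_ten_mul_factorial {k : ℕ} (hk : 6 ≤ k) : 40 ^ k ≤ 10 * (2 * k)! := by
  induction k, hk using Nat.le_induction with
  | base => decide
  | succ k hk ih =>
    have h40 : 40 ≤ (2 * k + 2) * (2 * k + 1) := by nlinarith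
    calc 40 ^ (k + 1) = 40 * 40 ^ k := pow_succ' _ _
      _ ≤ (2 * k + 2) * (2 * k + 1) * (10 * (2 * k)!) := Nat.mul_le_mul h40 ih
      _ = 10 * (2 * (k + 1))! := by
        rw [show 2 * (k + 1) = 2 * k + 1 + 1 by ring, factorial_succ, factorial_succ]; ring

theorem one_fifth_le_abs_bernoulli {k : ℕ} (hk : 6 ≤ k) : (1 / 5 : ℚ) ≤ |bernoulli (2 * k)| := by
  have hπ : (2 * π) ^ 2 < 40 := by nlinarith [pi_pos, pi_lt_d2]
  have hpow : (2 * π) ^ (2 * k) ≤ 40 ^ k := by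
    rw [pow_mul]; exact pow_le_pow_left₀ (by positivity) hπ.le k
  have hfac : (40 : ℝ) ^ k ≤ 10 * (2 * k)! := by
    exact_mod_cast forty_pow_le_ten_mul_factorial hk
  have hB := two_mul_factorial_le_two_pi_pow_mul_abs_bernoulli (k := k) (by omega)
  have hpos : (0 : ℝ) < (2 * k)! := by exact_mod_cast factorial_pos _
  have : ((1 / 5 : ℚ) : ℝ) ≤ ((|bernoulli (2 * k)| : ℚ) : ℝ) := by
    rw [Rat.cast_abs]; push_cast
    nlinarith [abs_nonneg (bernoulli (2 * k) : ℝ),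
      mul_le_mul_of_nonneg_right hpow (abs_nonneg (bernoulli (2 * k) : ℝ))]
  exact Rat.cast_le.mp this

theorem mul_le_abs_mul_sub_twentyfour {p : ℕ} (hp : 2 ≤ p) (a : ℕ) :
    1152 * (a : ℚ) ≤ |a * (240 * (p : ℚ) ^ 3 - 504 * p ^ 2) * (p ^ 2 + p ^ 3) - 24| := by
  have ha : (0 : ℚ) ≤ a := a.cast_nonneg
  rcases hp.eq_or_lt with rfl | hp3
  · rw [abs_of_nonpos (by push_cast; nlinarith)]
    push_cast; linarith
  · have hp3 : (3 : ℚ) ≤ p := by exact_mod_cast hp3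
    have h1 : (1944 : ℚ) ≤ 240 * (p : ℚ) ^ 3 - 504 * p ^ 2 := by nlinarith
    have h2 : (36 : ℚ) ≤ (p : ℚ) ^ 2 + p ^ 3 := by nlinarith
    have h3 : 1944 * 36 ≤ (240 * (p : ℚ) ^ 3 - 504 * p ^ 2) * (p ^ 2 + p ^ 3) := by
      gcongr
    rcases a.eq_zero_or_pos with rfl | ha1
    · norm_num
    · have ha1 : (1 : ℚ) ≤ a := by exact_mod_cast ha1
      rw [abs_of_nonneg (by nlinarith)]
      nlinarith

theorem sq_add_cube_pow_lt_one_add_pow {R : Type*} [Field R] [LinearOrder R]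
    [IsStrictOrderedRing R] {p : R} (hp : 2 ≤ p) (a : ℕ) :
    (p ^ 2 + p ^ 3) ^ a < 1 + p ^ (5 * a + 1) := by
  have h4 : p ^ 2 + p ^ 3 ≤ p ^ 4 := by
    have : p ^ 2 * (1 + p) ≤ p ^ 2 * p ^ 2 := by gcongr; nlinarith
    linarith
  calc (p ^ 2 + p ^ 3) ^ a ≤ (p ^ 4) ^ a := pow_le_pow_left₀ (by positivity) h4 a
    _ = p ^ (4 * a) := by rw [← pow_mul, mul_comm]
    _ ≤ p ^ (5 * a + 1) := pow_le_pow_right₀ (by linarith) (by omega)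
    _ < 1 + p ^ (5 * a + 1) := lt_one_add _

theorem one_add_div_ne_zero_of_lt_abs {K : Type*} [Field K] [LinearOrder K]
    [IsStrictOrderedRing K] {x d : K} (hd : 0 < d) (h : d < |x|) : 1 + x / d ≠ 0 := by
  intro h0
  have hx : x = -d := by field_simp at h0; linarith
  rw [hx, abs_neg, abs_of_pos hd] at h
  exact h.false

theorem stmt18 (p : ℕ) (hp : p.Prime) (α : ℕ) (hα : 1 ≤ α) :
    (1 : ℚ) + ((α : ℚ) * (240 * (p : ℚ) ^ 3 - 504 * (p : ℚ) ^ 2) *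
          ((p : ℚ) ^ 2 + (p : ℚ) ^ 3) - 24) * bernoulli (2 + 10 * α) *
        (1 + (p : ℚ) ^ (1 + 5 * α)) /
        (2 * (1 + 10 * (α : ℚ)) * ((p : ℚ) ^ 2 + (p : ℚ) ^ 3) ^ α)
      ≠ 0 := by
  have hp2 : (2 : ℚ) ≤ p := by exact_mod_cast hp.two_le
  have hα' : (1 : ℚ) ≤ α := by exact_mod_cast hα
  have hE := mul_le_abs_mul_sub_twentyfour hp.two_le α
  have hB : 1 / 5 ≤ |bernoulli (2 + 10 * α)| := by
    simpa [show 2 * (5 * α + 1) = 2 + 10 * α by ring] using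
      one_fifth_le_abs_bernoulli (k := 5 * α + 1) (by omega)
  have hC : ((p : ℚ) ^ 2 + p ^ 3) ^ α < 1 + p ^ (1 + 5 * α) := by
    simpa [add_comm] using sq_add_cube_pow_lt_one_add_pow hp2 α
  refine one_add_div_ne_zero_of_lt_abs (by positivity) ?_
  calc 2 * (1 + 10 * (α : ℚ)) * ((p : ℚ) ^ 2 + (p : ℚ) ^ 3) ^ α
      ≤ 1152 * (α : ℚ) * (1 / 5) * ((p : ℚ) ^ 2 + (p : ℚ) ^ 3) ^ α :=
        mul_le_mul_of_nonneg_right (by linarith) (by positivity)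
    _ < 1152 * (α : ℚ) * (1 / 5) * (1 + (p : ℚ) ^ (1 + 5 * α)) := by gcongr
    _ ≤ _ := by
      rw [abs_mul, abs_mul]
      gcongr
      exact le_abs_self _
end
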